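/- arXiv:math/0603513 — 2 statements merged into one kernel-verified Lean document; each statement's English description precedes it below -/
import Mathlib

section
/- Let G be a hereditarily non-topologizable group and let H be a subgroup of G. Then for every natural number k, the k-th derived subgroup H^(k) has finite index in H. -/
def NonTopologizable (G : Type*) [Group G] : Prop :=
  ∀ t : TopologicalSpace G, @IsTopologicalGroup G t _ → @T2Space G t → t = ⊥

def HereditarilyNonTopologizable (G : Type*) [Group G] : Prop :=
  ∀ (H : Subgroup G) (N : Subgroup ↥H) [N.Normal], NonTopologizable (↥H ⧸ N)

/-!
Pulling back the topology of a compact Hausdorff group along an injective homomorphism gives a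
Hausdorff group topology; if it is discrete, the image is a discrete, hence closed, hence compact
and finite subgroup. Characters with values in the circle separate the points of an abelian
group, so a non-topologizable abelian group is finite. Every subgroup of `H` is a subgroup of `G`,
so the abelianization of `H⁽ᵏ⁾` is finite, i.e. `H⁽ᵏ⁺¹⁾` has finite index in `H⁽ᵏ⁾`.
-/

open Function Topology

/-- Mathlib's characters take values in the rational circle `ℚ/ℤ`, which is not compact. -/
noncomputable def ratCircleToReal : AddCircle (1 : ℚ) →+ AddCircle (1 : ℝ) :=
  QuotientAddGroup.map _ _ (Rat.castHom ℝ).toAddMonoidHom <| by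
    rintro _ ⟨n, rfl⟩
    exact ⟨n, by simp⟩

lemma ratCircleToReal_injective : Injective ratCircleToReal := by
  refine (injective_iff_map_eq_zero _).mpr fun x hx => ?_
  induction x using QuotientAddGroup.induction_on with | H q =>
  obtain ⟨n, hn⟩ := (AddCircle.coe_eq_zero_iff _).mp hx
  exact (AddCircle.coe_eq_zero_iff _).mpr ⟨n, by simpa [← Rat.cast_inj (α := ℝ)] using hn⟩

noncomputable def CharacterModule.toRealCircles (A : Type*) [AddCommGroup A] :
    A →+ (CharacterModule A → AddCircle (1 : ℝ)) :=
  AddMonoidHom.pi fun c => ratCircleToReal.comp c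

lemma CharacterModule.toRealCircles_injective (A : Type*) [AddCommGroup A] :
    Injective (toRealCircles A) := by
  refine (injective_iff_map_eq_zero _).mpr fun a ha => eq_zero_of_character_apply fun c => ?_
  exact ratCircleToReal_injective ((congrFun ha c).trans (map_zero _).symm)

lemma NonTopologizable.of_mulEquiv {K K' : Type*} [Group K] [Group K'] (e : K ≃* K')
    (h : NonTopologizable K) : NonTopologizable K' := by
  intro t _ _
  let tK : TopologicalSpace K := t.induced e
  have hbot : tK = ⊥ := h _ (topologicalGroup_induced e) (IsEmbedding.induced e.injective).t2Space
  calc t = (t.coinduced e.symm).coinduced e := by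
        rw [coinduced_compose, e.self_comp_symm, coinduced_id]
    _ = tK.coinduced e := congrArg _ (congrFun e.toEquiv.coinduced_symm t)
    _ = ⊥ := by rw [hbot, coinduced_bot]

lemma NonTopologizable.finite_of_injective {G K : Type*} [Group G] [Group K] [TopologicalSpace K]
    [IsTopologicalGroup K] [T2Space K] [CompactSpace K] (hG : NonTopologizable G) {f : G →* K}
    (hf : Injective f) : Finite G := by
  let _ : TopologicalSpace G := .induced f ‹_›
  have hemb : IsEmbedding f := .induced hf
  have : IsTopologicalGroup G := topologicalGroup_induced f
  have : DiscreteTopology G := ⟨hG _ ‹_› hemb.t2Space⟩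
  have : DiscreteTopology f.range := hemb.toHomeomorph.discreteTopology
  have : CompactSpace G :=
    (IsClosedEmbedding.mk hemb (Subgroup.isClosed_of_discrete (H := f.range))).compactSpace
  exact finite_of_compact_of_discrete

lemma NonTopologizable.finite_of_commGroup {Q : Type*} [CommGroup Q] (h : NonTopologizable Q) :
    Finite Q :=
  have : Fact ((0 : ℝ) < 1) := ⟨one_pos⟩
  have : T2Space (Multiplicative (CharacterModule (Additive Q) → AddCircle (1 : ℝ))) :=
    inferInstanceAs (T2Space (CharacterModule (Additive Q) → AddCircle (1 : ℝ)))
  h.finite_of_injective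
    (f := AddMonoidHom.toMultiplicativeRight (α := Q) (CharacterModule.toRealCircles (Additive Q)))
    fun _ _ h => CharacterModule.toRealCircles_injective (Additive Q) h

lemma HereditarilyNonTopologizable.of_injective {G H : Type*} [Group G] [Group H]
    (hG : HereditarilyNonTopologizable G) {f : H →* G} (hf : Injective f) :
    HereditarilyNonTopologizable H := by
  intro K N _
  let e : K ≃* K.map f := K.equivMapOfInjective f hf
  have : (N.map (e : K →* K.map f)).Normal := Subgroup.Normal.map ‹_› _ e.surjective
  exact (hG _ (N.map (e : K →* K.map f))).of_mulEquiv (QuotientGroup.congr N _ e rfl).symm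

lemma HereditarilyNonTopologizable.finite_abelianization {G : Type*} [Group G]
    (hG : HereditarilyNonTopologizable G) (H : Subgroup G) : Finite (Abelianization H) :=
  NonTopologizable.finite_of_commGroup (hG H (_root_.commutator H))

lemma Subgroup.finiteIndex_commutator_self {G : Type*} [Group G] (H : Subgroup G) [H.FiniteIndex]
    [Finite (Abelianization H)] : ⁅H, H⁆.FiniteIndex := by
  have hrel : ⁅H, H⁆.subgroupOf H = _root_.commutator H := by
    rw [← H.map_subtype_commutator]
    exact comap_map_eq_self_of_injective H.subtype_injective _
  have : Finite (H ⧸ _root_.commutator H) := ‹Finite (Abelianization H)›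
  rw [finiteIndex_iff, ← relIndex_mul_index H.commutator_le_self, relIndex, hrel]
  exact mul_ne_zero index_ne_zero_of_finite FiniteIndex.index_ne_zero

theorem derivedSeries_finiteIndex {G : Type*} [Group G]
    (hG : HereditarilyNonTopologizable G) (H : Subgroup G) (k : ℕ) :
    (derivedSeries ↥H k).FiniteIndex := by
  have hH := hG.of_injective H.subtype_injective
  induction k with
  | zero => rw [derivedSeries_zero]; infer_instance
  | succ k ih =>
    have := hH.finite_abelianization (derivedSeries H k)
    rw [derivedSeries_succ]
    exact (derivedSeries H k).finiteIndex_commutator_self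
end

section
/- Let G be a group (of any cardinality). If the identity e is algebraically isolated in G, then G is non-topologizable, i.e. every topology on G making G a Hausdorff topological group is the discrete topology. -/
structure Monomial (G : Type*) [Group G] where
  head : G
  tail : List (ℤ × G)

def Monomial.eval {G : Type*} [Group G] (f : Monomial G) (g : G) : G :=
  f.head * (f.tail.map fun p => g ^ p.1 * p.2).prod

def AlgebraicallyIsolated (G : Type*) [Group G] : Prop :=
  ∃ fs : List (Monomial G), {g : G | g ≠ 1} = {g : G | ∃ f ∈ fs, f.eval g = 1}

namespace Monomial

variable {G : Type*} [Group G] [TopologicalSpace G] [IsTopologicalGroup G]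

theorem continuous_eval (f : Monomial G) : Continuous f.eval :=
  continuous_const.mul <| continuous_list_prod _ fun p _ =>
    (continuous_zpow p.1).mul continuous_const

theorem isClosed_setOf_eval_eq_one [T1Space G] (f : Monomial G) :
    IsClosed {g | f.eval g = 1} :=
  isClosed_singleton.preimage f.continuous_eval

end Monomial

namespace AlgebraicallyIsolated

variable {G : Type*} [Group G] [TopologicalSpace G] [IsTopologicalGroup G] [T1Space G]

theorem isOpen_singleton_one (h : AlgebraicallyIsolated G) : IsOpen ({1} : Set G) := by
  obtain ⟨fs, hfs⟩ := h
  have hclosed : IsClosed (⋃ f ∈ fs, {g : G | f.eval g = 1}) :=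
    fs.finite_toSet.isClosed_biUnion fun f _ => f.isClosed_setOf_eval_eq_one
  rw [← compl_compl ({1} : Set G), isOpen_compl_iff, Set.compl_singleton_eq, hfs]
  convert hclosed using 1
  ext
  simp

theorem discreteTopology (h : AlgebraicallyIsolated G) : DiscreteTopology G :=
  discreteTopology_of_isOpen_singleton_one h.isOpen_singleton_one

end AlgebraicallyIsolated

theorem nonTopologizable_of_algebraicallyIsolated {G : Type*} [Group G]
    (h : AlgebraicallyIsolated G) : NonTopologizable G := by
  intro t _ _
  exact h.discreteTopology.eq_bot
end
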